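/- arXiv:1509.00320 — 5 statements merged into one kernel-verified Lean document; each statement's English description precedes it below -/
import Mathlib

section
/- B is flat as an A-module; that is, the natural map A → B makes B a flat A-algebra. -/
open MvPowerSeries

/-- The ideal `(xy - c)` in the formal power series ring `A⟦x,y⟧`, where `x = X 0`,
`y = X 1`. -/
noncomputable def hyperIdeal (A : Type) [CommRing A] (c : A) :
    Ideal (MvPowerSeries (Fin 2) A) :=
  Ideal.span {X 0 * X 1 - (C c : MvPowerSeries (Fin 2) A)}

/-- The ring `B = A⟦x,y⟧/(xy - c)`. -/
abbrev Bring (A : Type) [CommRing A] (c : A) : Type :=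
  MvPowerSeries (Fin 2) A ⧸ hyperIdeal A c

/-!
As an `A`-module, `A⟦x,y⟧` is a product of copies of `A`, which is flat because `A` is
Noetherian (every finite relation is cut out by a finitely generated module of syzygies).
A quotient `M ⧸ K` of a flat module is flat as soon as `K ∩ I M = I K` for finitely generated
ideals `I`. For `K = (xy - c)` this says that `xy - c` is a nonzerodivisor on `(A ⧸ I)⟦x,y⟧`:
if `(xy - c) h` has coefficients in `I`, then `h_m ≡ c h_{m + (1,1)} ≡ … ≡ cⁿ h_{m + (n,n)}`
modulo `I` for all `n`, so `h_m ∈ I` by Krull's intersection theorem on `A ⧸ I`.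
-/

namespace Module.Flat

variable {R : Type*} [CommRing R]

instance pi_of_isNoetherianRing [IsNoetherianRing R] (σ : Type*) : Flat R (σ → R) := by
  refine of_forall_isTrivialRelation fun {l f x} hfx => ?_
  let syzygies := LinearMap.ker (Fintype.linearCombination R f)
  obtain ⟨k, gen, hgen⟩ :=
    Submodule.fg_iff_exists_fin_generating_family.mp (IsNoetherian.noetherian syzygies)
  have column_mem : ∀ s : σ, (fun i => x i s) ∈ Submodule.span R (Set.range gen) := by
    intro s
    rw [hgen, LinearMap.mem_ker, Fintype.linearCombination_apply]
    simpa [Finset.sum_apply, mul_comm] using congrFun hfx s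
  choose u hu using fun s => (Submodule.mem_span_range_iff_exists_fun R).mp (column_mem s)
  refine ⟨k, fun i j => gen j i, fun j s => u s j, fun i => ?_, fun j => ?_⟩
  · funext s
    simpa [Finset.sum_apply, mul_comm] using (congrFun (hu s) i).symm
  · have : gen j ∈ syzygies := hgen ▸ Submodule.subset_span ⟨j, rfl⟩
    simpa [syzygies, Fintype.linearCombination_apply, mul_comm] using this

variable {M : Type*} [AddCommGroup M] [Module R M]

theorem quotient_of_forall_exists_sum_smul_eq [Flat R M] (K : Submodule R M)
    (hK : ∀ {l : ℕ} (f : Fin l → R) (v : Fin l → M), ∑ i, f i • v i ∈ K →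
      ∃ w : Fin l → M, (∀ i, w i ∈ K) ∧ ∑ i, f i • v i = ∑ i, f i • w i) :
    Flat R (M ⧸ K) := by
  refine of_forall_isTrivialRelation fun {l f x} hfx => ?_
  choose v hv using fun i => K.mkQ_surjective (x i)
  have hvK : ∑ i, f i • v i ∈ K := by
    rw [← K.ker_mkQ, LinearMap.mem_ker, map_sum]
    simpa [hv] using hfx
  obtain ⟨w, hwK, hw⟩ := hK f v hvK
  have hrel : ∑ i, f i • (v i - w i) = 0 := by
    simp only [smul_sub, Finset.sum_sub_distrib, hw, sub_self]
  obtain ⟨k, a, y, hy, ha⟩ := isTrivialRelation_of_sum_smul_eq_zero hrel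
  refine ⟨k, a, fun j => K.mkQ (y j), fun i => ?_, ha⟩
  have hw0 : K.mkQ (w i) = 0 := (Submodule.Quotient.mk_eq_zero K).mpr (hwK i)
  rw [← hv i, ← sub_zero (K.mkQ (v i)), ← hw0, ← map_sub, show v i - w i = _ from hy i, map_sum]
  simp

end Module.Flat

theorem Ideal.mem_of_forall_sub_pow_mul_mem {R : Type*} [CommRing R] [IsNoetherianRing R]
    {c : R} (hc : c ∈ (⊥ : Ideal R).jacobson) (I : Ideal R) {a : R}
    (h : ∀ n : ℕ, ∃ b, a - c ^ n * b ∈ I) : a ∈ I := by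
  have hspan : Ideal.span {c} ≤ (⊥ : Ideal R).jacobson :=
    (Ideal.span_singleton_le_iff_mem _).mpr hc
  have krull := (Ideal.span {c}).iInf_pow_smul_eq_bot_of_le_jacobson (M := R ⧸ I) hspan
  rw [← Ideal.Quotient.eq_zero_iff_mem, ← Submodule.mem_bot R, ← krull, Submodule.mem_iInf]
  intro n
  obtain ⟨b, hb⟩ := h n
  have : Ideal.Quotient.mk I a = c ^ n • Ideal.Quotient.mk I b := by
    rw [Algebra.smul_def, Ideal.Quotient.algebraMap_eq, ← map_mul]
    exact Ideal.Quotient.eq.mpr hb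
  rw [this]
  exact Submodule.smul_mem_smul (Ideal.pow_mem_pow (Ideal.mem_span_singleton_self c) n) trivial

namespace MvPowerSeries

variable {σ R : Type*}

theorem coeff_add_monomial_sub_C_mul [CommRing R] (e m : σ →₀ ℕ) (c : R)
    (h : MvPowerSeries σ R) :
    coeff (m + e) ((monomial e 1 - C c) * h) = coeff m h - c * coeff (m + e) h := by
  rw [sub_mul, map_sub, coeff_monomial_mul, if_pos le_add_self, add_tsub_cancel_right, one_mul,
    coeff_C_mul]

theorem coeff_mem_of_coeff_monomial_sub_C_mul_mem [CommRing R] [IsNoetherianRing R]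
    (e : σ →₀ ℕ) {c : R} (hc : c ∈ (⊥ : Ideal R).jacobson) (I : Ideal R)
    {h : MvPowerSeries σ R} (hI : ∀ m, coeff m ((monomial e 1 - C c) * h) ∈ I) (m : σ →₀ ℕ) :
    coeff m h ∈ I := by
  have step : ∀ m, coeff m h - c * coeff (m + e) h ∈ I := fun m =>
    coeff_add_monomial_sub_C_mul e m c h ▸ hI (m + e)
  have iterate : ∀ n : ℕ, coeff m h - c ^ n * coeff (m + n • e) h ∈ I := by
    intro n
    induction n with
    | zero => simp
    | succ n ih =>
      convert I.add_mem ih (I.mul_mem_left (c ^ n) (step (m + n • e))) using 1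
      rw [succ_nsmul, ← add_assoc]
      ring
  exact Ideal.mem_of_forall_sub_pow_mul_mem hc I fun n => ⟨_, iterate n⟩

theorem exists_eq_sum_smul_of_coeff_mem_span [CommSemiring R] {l : ℕ} (f : Fin l → R)
    (h : MvPowerSeries σ R) (hf : ∀ m, coeff m h ∈ Ideal.span (Set.range f)) :
    ∃ t : Fin l → MvPowerSeries σ R, h = ∑ i, f i • t i := by
  choose u hu using fun m => (Submodule.mem_span_range_iff_exists_fun R).mp (hf m)
  refine ⟨fun i m => u m i, ?_⟩
  ext m
  rw [map_sum, ← hu m]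
  exact Finset.sum_congr rfl fun i _ => (smul_eq_mul _ _).trans (mul_comm _ _)

theorem flat_quotient_span_singleton [CommRing R] [IsNoetherianRing R] (g : MvPowerSeries σ R)
    (hg : ∀ (I : Ideal R) (h : MvPowerSeries σ R), (∀ m, coeff m (g * h) ∈ I) →
      ∀ m, coeff m h ∈ I) :
    Module.Flat R (MvPowerSeries σ R ⧸ Ideal.span {g}) := by
  let K := (Ideal.span {g}).restrictScalars R
  suffices Module.Flat R (MvPowerSeries σ R ⧸ K) from
    .of_linearEquiv (Submodule.Quotient.restrictScalarsEquiv R (Ideal.span {g})).symm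
  have : Module.Flat R (MvPowerSeries σ R) := Module.Flat.pi_of_isNoetherianRing _
  refine Module.Flat.quotient_of_forall_exists_sum_smul_eq K fun {l} f v hv => ?_
  obtain ⟨h, hh⟩ := Ideal.mem_span_singleton'.mp ((Submodule.restrictScalars_mem _ _ _).mp hv)
  have coeff_sum_mem : ∀ m, coeff m (∑ i, f i • v i) ∈ Ideal.span (Set.range f) := fun m => by
    rw [map_sum]
    exact Ideal.sum_mem _ fun i _ => coeff_smul (v i) m (f i) ▸
      Ideal.mul_mem_right _ _ (Ideal.subset_span ⟨i, rfl⟩)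
  obtain ⟨t, ht⟩ := exists_eq_sum_smul_of_coeff_mem_span f h
    (hg _ h fun m => mul_comm g h ▸ hh ▸ coeff_sum_mem m)
  refine ⟨fun i => t i * g, fun i => Ideal.mul_mem_left _ _ (Ideal.mem_span_singleton_self g), ?_⟩
  rw [← hh, ht, Finset.sum_mul]
  exact Finset.sum_congr rfl fun i _ => smul_mul_assoc (f i) (t i) g

end MvPowerSeries

/-- If `A` is a Noetherian local ring and `c` an element of its maximal ideal, then
`B = A⟦x,y⟧/(xy - c)` is flat as an `A`-module. -/
theorem flat_of_hyper (A : Type) [CommRing A] [IsNoetherianRing A] [IsLocalRing A]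
    (c : A) (hc : c ∈ IsLocalRing.maximalIdeal A) :
    Module.Flat A (Bring A c) := by
  have hxy : (X 0 * X 1 : MvPowerSeries (Fin 2) A) = monomial (.single 0 1 + .single 1 1) 1 := by
    rw [X_def, X_def, monomial_mul_monomial, one_mul]
  have hc' : c ∈ (⊥ : Ideal A).jacobson := IsLocalRing.maximalIdeal_le_jacobson _ hc
  exact MvPowerSeries.flat_quotient_span_singleton _ fun I h hI =>
    coeff_mem_of_coeff_monomial_sub_C_mul_mem _ hc' I (hxy ▸ hI)
end

section
/- The quotient ring D⟦z⟧[X]/(X² − zX + c) of the polynomial ring over D⟦z⟧ by the ideal generated by the monic quadratic X² − zX + c is reduced. -/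
/-!
Over a domain `R`, every class of `R[X]/(X² + pX + s)` is `a + bθ` with `θ` the class of `X`, and
`(a + bθ)² = (2ab - b²p)θ + (a² - b²s)`. If both coefficients vanish and `b ≠ 0`, then `2a = bp`,
whence `b²(p² - 4s) = 0`; so a nonzero discriminant forces `b = 0` and then `a = 0`.
For `X² - zX + c` over `D⟦z⟧` the discriminant `z² - 4c` has `z²`-coefficient `1`.
-/

open Polynomial

namespace AdjoinRoot

variable {R : Type*} [CommRing R] {f : R[X]}

theorem exists_eq_mk_linear (hf : f.Monic) (hdeg : f.natDegree = 2) (x : AdjoinRoot f) :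
    ∃ a b : R, x = mk f (C b * X + C a) := by
  have hg : (modByMonicHom hf x).natDegree ≤ 1 := by
    obtain ⟨g, rfl⟩ := mk_surjective x
    have := natDegree_modByMonic_lt g hf (by rintro rfl; simp at hdeg)
    rw [modByMonicHom_mk]
    omega
  exact ⟨_, _, by rw [← eq_X_add_C_of_natDegree_le_one hg, mk_leftInverse hf]⟩

theorem eq_zero_of_mk_linear_eq_zero [Nontrivial R] (hf : f.Monic) (hdeg : f.natDegree = 2)
    {a b : R} (h : mk f (C b * X + C a) = 0) : a = 0 ∧ b = 0 := by
  have hzero : C b * X + C a = 0 := by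
    by_contra hne
    refine hf.not_dvd_of_degree_lt hne ?_ (mk_eq_zero.mp h)
    rw [(degree_eq_iff_natDegree_eq hf.ne_zero).mpr hdeg]
    exact degree_linear_le.trans_lt (by norm_num)
  exact ⟨by simpa using congrArg (coeff · 0) hzero, by simpa using congrArg (coeff · 1) hzero⟩

theorem mk_linear_sq (p s a b : R) :
    mk (X ^ 2 + C p * X + C s) (C b * X + C a) ^ 2 =
      mk (X ^ 2 + C p * X + C s) (C (2 * a * b - b ^ 2 * p) * X + C (a ^ 2 - b ^ 2 * s)) := by
  rw [← map_pow, mk_eq_mk]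
  exact ⟨C (b ^ 2), by simp only [map_sub, map_mul, map_pow, map_ofNat]; ring⟩

end AdjoinRoot

theorem eq_zero_of_sq_mod_quadratic_eq_zero {R : Type*} [CommRing R] [NoZeroDivisors R]
    {p s a b : R} (hd : discrim 1 p s ≠ 0) (h₁ : 2 * a * b - b ^ 2 * p = 0)
    (h₀ : a ^ 2 - b ^ 2 * s = 0) : a = 0 ∧ b = 0 := by
  have hb : b = 0 := by
    by_contra hb
    have h2a : 2 * a - b * p = 0 :=
      (mul_eq_zero.mp (by linear_combination h₁ : b * (2 * a - b * p) = 0)).resolve_left hb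
    apply hd
    have : b ^ 2 * discrim 1 p s = 0 := by
      rw [discrim]; linear_combination (-(2 * a) - b * p) * h2a + 4 * h₀
    exact (mul_eq_zero.mp this).resolve_left (pow_ne_zero 2 hb)
  subst hb
  exact ⟨pow_eq_zero_iff two_ne_zero |>.mp (by simpa using h₀), rfl⟩

theorem isReduced_adjoinRoot_quadratic {R : Type*} [CommRing R] [IsDomain R] {p s : R}
    (hd : discrim 1 p s ≠ 0) : IsReduced (AdjoinRoot (X ^ 2 + C p * X + C s)) := by
  have hf : (X ^ 2 + C p * X + C s).Monic := by monicity!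
  have hdeg : (X ^ 2 + C p * X + C s).natDegree = 2 := by compute_degree!
  refine (isReduced_iff_pow_one_lt 2 one_lt_two).mpr fun x hx => ?_
  obtain ⟨a, b, rfl⟩ := AdjoinRoot.exists_eq_mk_linear hf hdeg x
  rw [AdjoinRoot.mk_linear_sq] at hx
  obtain ⟨h₀, h₁⟩ := AdjoinRoot.eq_zero_of_mk_linear_eq_zero hf hdeg hx
  obtain ⟨rfl, rfl⟩ := eq_zero_of_sq_mod_quadratic_eq_zero hd h₁ h₀
  simp

theorem PowerSeries.discrim_neg_X_C_ne_zero {D : Type*} [CommRing D] [Nontrivial D] (c : D) :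
    discrim 1 (-X) (C c) ≠ 0 := by
  intro h
  rw [discrim, ← map_ofNat C 4, mul_one, ← map_mul] at h
  simpa [coeff_X_pow, coeff_C] using congrArg (coeff 2) h

/-- If `D` is an integral domain and `c ∈ D`, then the quotient
`D⟦z⟧[X]/(X² - zX + c)` of the polynomial ring over the power series ring `D⟦z⟧`
by the monic quadratic `X² - zX + c` is reduced. -/
theorem quad_quotient_reduced (D : Type) [CommRing D] [IsDomain D] (c : D) :
    IsReduced (Polynomial (PowerSeries D) ⧸
      Ideal.span {Polynomial.X ^ 2 - Polynomial.C PowerSeries.X * Polynomial.X +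
        Polynomial.C (PowerSeries.C c)}) := by
  have h := isReduced_adjoinRoot_quadratic (PowerSeries.discrim_neg_X_C_ne_zero c)
  rwa [map_neg, neg_mul, ← sub_eq_add_neg] at h
end

section
/- T satisfies T(ab) = T(ba) for all a, b ∈ A[G], and T vanishes on the two-sided ideal J of A[G] generated by the elements g² − t(g)·g + d(g)·1 for g ∈ G. In particular, T factors through an A-linear map on the Cayley–Hamilton quotient A[G]/J. -/
/-!
The bilinear form `(a, b) ↦ T (a * b)` is symmetric because `t` is a class function, so its
radical `{x | ∀ c, T (c * x) = 0}` is a two-sided ideal, and `T` vanishes on it. It therefore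
suffices that `T (h * (g² - t(g) g + d(g))) = 0` for `g, h ∈ G`, and this is the determinant
identity applied to the pair `(g, g * h)`.
-/

open MonoidAlgebra

section TraceForm

variable {R M : Type*} [Ring R] [AddCommGroup M] (T : R →+ M)

/-- The radical of the form `(a, b) ↦ T (a * b)`; the trace property makes it two-sided. -/
def traceFormRadical (hT : ∀ a b, T (a * b) = T (b * a)) : TwoSidedIdeal R :=
  TwoSidedIdeal.mk' {x | ∀ c, T (c * x) = 0}
    (fun c => by rw [mul_zero, map_zero])
    (fun hx hy c => by rw [mul_add, map_add, hx c, hy c, add_zero])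
    (fun hx c => by rw [mul_neg, map_neg, hx c, neg_zero])
    (fun hy c => by rw [← mul_assoc]; exact hy _)
    (fun {x y} hx c => by rw [← mul_assoc, hT, ← mul_assoc]; exact hx _)

theorem mem_traceFormRadical {hT : ∀ a b, T (a * b) = T (b * a)} {x : R} :
    x ∈ traceFormRadical T hT ↔ ∀ c, T (c * x) = 0 :=
  TwoSidedIdeal.mem_mk' _ _ _ _ _ _ _

theorem map_eq_zero_of_mem_span_of_forall_map_mul_eq_zero
    (hT : ∀ a b, T (a * b) = T (b * a)) {s : Set R} (hs : ∀ x ∈ s, ∀ c, T (c * x) = 0)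
    {x : R} (hx : x ∈ TwoSidedIdeal.span s) : T x = 0 := by
  have hx' : x ∈ traceFormRadical T hT :=
    TwoSidedIdeal.mem_span_iff.mp hx _ fun y hy => (mem_traceFormRadical T).mpr (hs y hy)
  simpa using (mem_traceFormRadical T).mp hx' 1

end TraceForm

namespace MonoidAlgebra

section LinearMap

variable {k G M : Type*} [CommSemiring k] [AddCommMonoid M] [Module k M]

theorem linearMap_single (T : MonoidAlgebra k G →ₗ[k] M) (g : G) (a : k) :
    T (single g a) = a • T (single g 1) := by
  rw [← map_smul, smul_single', mul_one]

theorem linearMap_mul_comm [Monoid G] (T : MonoidAlgebra k G →ₗ[k] M)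
    (hT : ∀ g h : G, T (single (g * h) 1) = T (single (h * g) 1)) (a b : MonoidAlgebra k G) :
    T (a * b) = T (b * a) := by
  induction a using MonoidAlgebra.induction_linear with
  | zero => simp
  | add a a' ha ha' => rw [add_mul, mul_add, map_add, map_add, ha, ha']
  | single g r =>
    induction b using MonoidAlgebra.induction_linear with
    | zero => simp
    | add b b' hb hb' => rw [add_mul, mul_add, map_add, map_add, hb, hb']
    | single h s =>
      rw [single_mul_single, single_mul_single, linearMap_single, linearMap_single (g := h * g),
        hT, mul_comm r s]

end LinearMap

section DeterminantDatum

variable {A G : Type*} [CommRing A] [Group G]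

noncomputable def cayleyHamilton (t : G → A) (d : G →* Aˣ) (g : G) : MonoidAlgebra A G :=
  single g 1 * single g 1 - single g (t g) + single 1 (d g : A)

theorem linearMap_mul_cayleyHamilton {t : G → A} {d : G →* Aˣ}
    (ht_comm : ∀ g h : G, t (g * h) = t (h * g))
    (h_det : ∀ g h : G, (d g : A) * t (g⁻¹ * h) - t g * t h + t (g * h) = 0)
    (T : MonoidAlgebra A G →ₗ[A] A) (hT : ∀ g : G, T (single g 1) = t g)
    (c : MonoidAlgebra A G) (g : G) : T (c * cayleyHamilton t d g) = 0 := by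
  induction c using MonoidAlgebra.induction_linear with
  | zero => simp
  | add c c' hc hc' => rw [add_mul, map_add, hc, hc', add_zero]
  | single h r =>
    have hdet := h_det g (g * h)
    rw [inv_mul_cancel_left, ← mul_assoc] at hdet
    have hgg : t (h * (g * g)) = t (g * g * h) := ht_comm h (g * g)
    simp only [cayleyHamilton, mul_add, mul_sub, single_mul_single, map_add, map_sub, mul_one]
    rw [linearMap_single T (h * (g * g)), linearMap_single T (h * g), linearMap_single T h,
      hT, hT, hT, hgg, ht_comm h g]
    simp only [smul_eq_mul]
    linear_combination r * hdet

end DeterminantDatum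

end MonoidAlgebra

theorem trace_symm_and_vanishes_on_CH_ideal_general (A : Type) [CommRing A]
    (G : Type) [Group G] (d : G →* Aˣ) (t : G → A)
    (ht_comm : ∀ g h : G, t (g * h) = t (h * g))
    (h_det : ∀ g h : G, (d g : A) * t (g⁻¹ * h) - t g * t h + t (g * h) = 0)
    (T : MonoidAlgebra A G →ₗ[A] A)
    (hT : ∀ g : G, T (MonoidAlgebra.single g 1) = t g)
    (J : TwoSidedIdeal (MonoidAlgebra A G))
    (hJ : J = TwoSidedIdeal.span
      {x : MonoidAlgebra A G | ∃ g : G,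
        x = MonoidAlgebra.single g 1 * MonoidAlgebra.single g 1
          - MonoidAlgebra.single g (t g) + MonoidAlgebra.single 1 ((d g : A))}) :
    (∀ a b : MonoidAlgebra A G, T (a * b) = T (b * a)) ∧
      (∀ x ∈ J, T x = 0) := by
  have trace : ∀ a b : MonoidAlgebra A G, T (a * b) = T (b * a) :=
    linearMap_mul_comm T fun g h => by rw [hT, hT, ht_comm]
  refine ⟨trace, fun x hx => ?_⟩
  subst hJ
  refine map_eq_zero_of_mem_span_of_forall_map_mul_eq_zero T.toAddMonoidHom trace ?_ hx
  rintro _ ⟨g, rfl⟩ c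
  exact linearMap_mul_cayleyHamilton (d := d) ht_comm h_det T hT c g

/-- Let `(t, d)` be a 2-dimensional determinant datum on a group `G` with values in a
commutative ring `A`, and let `T : A[G] → A` be the `A`-linear extension of `t` to the
group algebra.  Then `T(ab) = T(ba)` for all `a, b ∈ A[G]`, and `T` vanishes on the
two-sided ideal `J` of `A[G]` generated by the elements `g² - t(g)·g + d(g)·1` for
`g ∈ G` (so that `T` factors through the Cayley–Hamilton quotient `A[G]/J`). -/
theorem trace_symm_and_vanishes_on_CH_ideal (A : Type) [CommRing A]
    (G : Type) [Group G] (d : G →* Aˣ) (t : G → A) (ht_one : t 1 = 2)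
    (ht_comm : ∀ g h : G, t (g * h) = t (h * g))
    (h_det : ∀ g h : G, (d g : A) * t (g⁻¹ * h) - t g * t h + t (g * h) = 0)
    (T : MonoidAlgebra A G →ₗ[A] A)
    (hT : ∀ g : G, T (MonoidAlgebra.single g 1) = t g)
    (J : TwoSidedIdeal (MonoidAlgebra A G))
    (hJ : J = TwoSidedIdeal.span
      {x : MonoidAlgebra A G | ∃ g : G,
        x = MonoidAlgebra.single g 1 * MonoidAlgebra.single g 1
          - MonoidAlgebra.single g (t g) + MonoidAlgebra.single 1 ((d g : A))}) :
    (∀ a b : MonoidAlgebra A G, T (a * b) = T (b * a)) ∧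
      (∀ x ∈ J, T x = 0) :=
  trace_symm_and_vanishes_on_CH_ideal_general A G d t ht_comm h_det T hT J hJ
end

section
/- Suppose ψ₁, ψ₂ : G → Aˣ both lift χ₁ and ψ₁′, ψ₂′ : G → Aˣ both lift χ₂, and that for every g ∈ G one has ψ₁(g) + ψ₁′(g) = ψ₂(g) + ψ₂′(g) and ψ₁(g)·ψ₁′(g) = ψ₂(g)·ψ₂′(g). Then ψ₁ = ψ₂ and ψ₁′ = ψ₂′. (Equivalently: a pair of character lifts of (χ₁, χ₂) is uniquely determined by the associated split 2-dimensional determinant, i.e. by the pair of functions (ψ + ψ′, ψ·ψ′).) -/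
/-! Since `ψ₁ + ψ₁' = ψ₂ + ψ₂'` and `ψ₁ ψ₁' = ψ₂ ψ₂'`, the value `ψ₂ g` is a root of
`(X - ψ₁ g)(X - ψ₁' g)`. Where `χ₁ g ≠ χ₂ g` the factor `ψ₂ g - ψ₁' g` is a unit, hence
`ψ₁ g = ψ₂ g`. The locus `χ₁ = χ₂` is a proper subgroup, and two homomorphisms agreeing
off a proper subgroup agree everywhere; then `ψ₁' = ψ₂'` follows from the sum relation. -/

theorem MonoidHom.eq_of_eqOn_compl {G M : Type*} [Group G] [MulOneClass M] {f f' : G →* M}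
    {K : Subgroup G} (hK : K ≠ ⊤) (h : ∀ g ∉ K, f g = f' g) : f = f' := by
  obtain ⟨x, hx⟩ : ∃ x, x ∉ K := by simpa [Subgroup.eq_top_iff'] using hK
  ext g
  by_cases hg : g ∈ K
  · have hgx : g * x ∉ K := fun hgx => hx ((K.mul_mem_cancel_left hg).mp hgx)
    calc f g = f (g * x) * f x⁻¹ := by rw [← map_mul, mul_inv_cancel_right]
      _ = f' (g * x) * f' x⁻¹ := by rw [h _ hgx, h _ (K.inv_mem_iff.not.mpr hx)]
      _ = f' g := by rw [← map_mul, mul_inv_cancel_right]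
  · exact h g hg

theorem IsLocalRing.eq_of_add_eq_add_of_mul_eq_mul {A : Type*} [CommRing A] [IsLocalRing A]
    {a b c d : A} (hsum : a + b = c + d) (hprod : a * b = c * d)
    (hres : residue A c ≠ residue A b) : a = c := by
  have hroot : (c - a) * (c - b) = 0 := by linear_combination hprod - c * hsum
  have hunit : IsUnit (c - b) := by
    rw [← residue_ne_zero_iff_isUnit, map_sub, sub_ne_zero]
    exact hres
  exact (sub_eq_zero.mp (hunit.mul_left_eq_zero.mp hroot)).symm

theorem lift_determined_by_determinant_general (A : Type) [CommRing A] [IsLocalRing A]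
    (G : Type) [Group G]
    (χ₁ χ₂ : G →* (IsLocalRing.ResidueField A)ˣ) (hχ : χ₁ ≠ χ₂)
    (ψ₁ ψ₂ ψ₁' ψ₂' : G →* Aˣ)
    (h₂ : (Units.map (IsLocalRing.residue A).toMonoidHom).comp ψ₂ = χ₁)
    (h₁' : (Units.map (IsLocalRing.residue A).toMonoidHom).comp ψ₁' = χ₂)
    (hsum : ∀ g : G, (ψ₁ g : A) + (ψ₁' g : A) = (ψ₂ g : A) + (ψ₂' g : A))
    (hprod : ∀ g : G, (ψ₁ g : A) * (ψ₁' g : A) = (ψ₂ g : A) * (ψ₂' g : A)) :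
    ψ₁ = ψ₂ ∧ ψ₁' = ψ₂' := by
  have hproper : MonoidHom.eqLocus χ₁ χ₂ ≠ ⊤ := fun htop =>
    hχ (MonoidHom.ext fun g => (htop ▸ Subgroup.mem_top g : g ∈ MonoidHom.eqLocus χ₁ χ₂))
  have hψ : ψ₁ = ψ₂ := by
    refine MonoidHom.eq_of_eqOn_compl hproper fun g hg => Units.ext ?_
    refine IsLocalRing.eq_of_add_eq_add_of_mul_eq_mul (hsum g) (hprod g) fun hres => hg ?_
    exact Units.ext (by simpa [← h₂, ← h₁'] using hres)
  refine ⟨hψ, MonoidHom.ext fun g => Units.ext ?_⟩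
  exact add_left_cancel (hψ ▸ hsum g)

/-- Let `A` be a commutative local ring with residue field `k`, `G` a group, and
`χ₁ ≠ χ₂ : G → kˣ` two distinct characters.  If `ψ₁, ψ₂ : G → Aˣ` both lift `χ₁`,
`ψ₁', ψ₂' : G → Aˣ` both lift `χ₂`, and for every `g ∈ G` one has
`ψ₁(g) + ψ₁'(g) = ψ₂(g) + ψ₂'(g)` and `ψ₁(g)·ψ₁'(g) = ψ₂(g)·ψ₂'(g)`, then `ψ₁ = ψ₂`
and `ψ₁' = ψ₂'`; i.e. a pair of character lifts of `(χ₁, χ₂)` is determined by the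
associated split 2-dimensional determinant. -/
theorem lift_determined_by_determinant (A : Type) [CommRing A] [IsLocalRing A]
    (G : Type) [Group G]
    (χ₁ χ₂ : G →* (IsLocalRing.ResidueField A)ˣ) (hχ : χ₁ ≠ χ₂)
    (ψ₁ ψ₂ ψ₁' ψ₂' : G →* Aˣ)
    (h₁ : (Units.map (IsLocalRing.residue A).toMonoidHom).comp ψ₁ = χ₁)
    (h₂ : (Units.map (IsLocalRing.residue A).toMonoidHom).comp ψ₂ = χ₁)
    (h₁' : (Units.map (IsLocalRing.residue A).toMonoidHom).comp ψ₁' = χ₂)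
    (h₂' : (Units.map (IsLocalRing.residue A).toMonoidHom).comp ψ₂' = χ₂)
    (hsum : ∀ g : G, (ψ₁ g : A) + (ψ₁' g : A) = (ψ₂ g : A) + (ψ₂' g : A))
    (hprod : ∀ g : G, (ψ₁ g : A) * (ψ₁' g : A) = (ψ₂ g : A) * (ψ₂' g : A)) :
    ψ₁ = ψ₂ ∧ ψ₁' = ψ₂' :=
  lift_determined_by_determinant_general A G χ₁ χ₂ hχ ψ₁ ψ₂ ψ₁' ψ₂' h₂ h₁' hsum hprod
end

section
/- For every g ∈ P one has e·g·e ≡ e modulo J; equivalently, e·(g − 1)·e ∈ J for all g ∈ P. -/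
open SemidirectProduct

/-!
Left and right multiplication by `h ∈ H` act on the idempotent `e` through the scalar `χ₂ h`.
For `g ∈ P` and `h ∈ H`, multiplying the relation of `u = g⁻¹ h` by `e g` on the left and by `e`
on the right therefore gives, modulo `J`,
`χ₂(h) (e g⁻¹ e - e) + χ₁(h) (e g e - e) ≡ 0`.
Comparing `h = 1` with an `h₀` where `χ₁(h₀) ≠ χ₂(h₀)` eliminates `e g⁻¹ e - e`.
-/

section CharIdempotent

variable {k A H : Type*} [Semifield k] [Semiring A] [Algebra k A] [Group H] [Fintype H]

def charIdempotent (χ : H →* kˣ) (ρ : H →* A) : A :=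
  (Fintype.card H : k)⁻¹ • ∑ h : H, (χ h : k) • ρ h⁻¹

variable (χ : H →* kˣ) (ρ : H →* A)

theorem charIdempotent_mul_map (h : H) :
    charIdempotent χ ρ * ρ h = (χ h : k) • charIdempotent χ ρ := by
  rw [charIdempotent, smul_mul_assoc, smul_comm (χ h : k), Finset.sum_mul]
  congr 1
  rw [Finset.smul_sum]
  refine Fintype.sum_equiv (Equiv.mulLeft h⁻¹) _ _ fun t => ?_
  rw [Equiv.coe_mulLeft, smul_mul_assoc, ← map_mul, smul_smul, ← Units.val_mul, ← map_mul,
    mul_inv_cancel_left, mul_inv_rev, inv_inv]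

theorem map_mul_charIdempotent (h : H) :
    ρ h * charIdempotent χ ρ = (χ h : k) • charIdempotent χ ρ := by
  rw [charIdempotent, mul_smul_comm, smul_comm (χ h : k), Finset.mul_sum]
  congr 1
  rw [Finset.smul_sum]
  refine Fintype.sum_equiv (Equiv.mulRight h⁻¹) _ _ fun t => ?_
  rw [Equiv.coe_mulRight, mul_smul_comm, ← map_mul, smul_smul, mul_comm (χ h : k),
    ← Units.val_mul, ← map_mul, inv_mul_cancel_right, mul_inv_rev, inv_inv]

theorem isIdempotentElem_charIdempotent (hH : (Fintype.card H : k) ≠ 0) :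
    IsIdempotentElem (charIdempotent χ ρ) := by
  have absorb (t : H) : charIdempotent χ ρ * (χ t : k) • ρ t⁻¹ = charIdempotent χ ρ := by
    rw [mul_smul_comm, charIdempotent_mul_map, smul_smul, ← Units.val_mul, ← map_mul,
      mul_inv_cancel, map_one, Units.val_one, one_smul]
  rw [IsIdempotentElem]
  nth_rewrite 2 [charIdempotent]
  simp only [mul_smul_comm, Finset.mul_sum, absorb, Finset.sum_const, Finset.card_univ,
    ← Nat.cast_smul_eq_nsmul k, smul_smul, inv_mul_cancel₀ hH, one_smul]

end CharIdempotent

theorem IsIdempotentElem.sandwich_quadratic {k A : Type*} [CommRing k] [Ring A] [Algebra k A]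
    {e r a b : A} {c : k} (hee : IsIdempotentElem e) (her : e * r = c • e) (hre : r * e = c • e)
    (hab : a * b = 1) (α : k) :
    e * a * ((b * r) * (b * r) - (α + c) • (b * r) + (α * c) • 1) * e
      = c • (c • (e * b * e - e) + α • (e * a * e - e)) := by
  have hzz : e * a * ((b * r) * (b * r)) * e = (c * c) • (e * b * e) :=
    calc e * a * ((b * r) * (b * r)) * e = e * (a * b) * r * b * (r * e) := by
          simp only [mul_assoc]
      _ = (c * c) • (e * b * e) := by
          rw [hab, mul_one, her, hre, smul_mul_assoc, smul_mul_assoc, mul_smul_comm, smul_smul]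
  have hz : e * a * (b * r) * e = c • e := by
    rw [← mul_assoc, mul_assoc e a b, hab, mul_one, her, smul_mul_assoc, hee.eq]
  simp only [mul_sub, mul_add, sub_mul, add_mul, mul_smul_comm, smul_mul_assoc, mul_one, hzz, hz]
  module

theorem Submodule.mem_of_add_mem_of_smul_add_smul_mem {k M : Type*} [Field k] [AddCommGroup M]
    [Module k M] {N : Submodule k M} {u v : M} {c₁ c₂ : k} (hc : c₁ ≠ c₂) (huv : u + v ∈ N)
    (hcuv : c₂ • u + c₁ • v ∈ N) : v ∈ N := by
  have hdiff : (c₂ - c₁) • v = c₂ • (u + v) - (c₂ • u + c₁ • v) := by module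
  rw [← N.smul_mem_iff (sub_ne_zero.mpr hc.symm), hdiff]
  exact N.sub_mem (N.smul_mem c₂ huv) hcuv

/-- Let `k` be a field, `H` a finite group whose order is invertible in `k`, `P` a
group with an action `φ` of `H`, and `G = P ⋊ H`.  Let `χ₁ ≠ χ₂ : H → kˣ` be two
distinct characters, regarded as functions on `G` via the projection `G → H`.  Let `J`
be the two-sided ideal of `k[G]` generated by `g² - (χ₁(g) + χ₂(g))·g + χ₁(g)χ₂(g)·1`
for `g ∈ G`, and let `e = |H|⁻¹ ∑_{h ∈ H} χ₂(h)·h⁻¹ ∈ k[G]`.  Then for every `g ∈ P`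
one has `e·g·e ≡ e (mod J)`, i.e. `e·g·e - e ∈ J`. -/
theorem idem_conj_mem_CH_ideal (k : Type) [Field k] (P H : Type)
    [Group P] [Group H] [Fintype H] (hH : (Fintype.card H : k) ≠ 0)
    (φ : H →* MulAut P)
    (χ₁ χ₂ : H →* kˣ) (hχ : χ₁ ≠ χ₂)
    (J : TwoSidedIdeal (MonoidAlgebra k (P ⋊[φ] H)))
    (hJ : J = TwoSidedIdeal.span
      {x : MonoidAlgebra k (P ⋊[φ] H) | ∃ g : P ⋊[φ] H,
        x = MonoidAlgebra.single g 1 * MonoidAlgebra.single g 1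
          - MonoidAlgebra.single g ((χ₁ (rightHom g) : k) + (χ₂ (rightHom g) : k))
          + MonoidAlgebra.single 1 ((χ₁ (rightHom g) : k) * (χ₂ (rightHom g) : k))})
    (e : MonoidAlgebra k (P ⋊[φ] H))
    (he : e = (Fintype.card H : k)⁻¹ •
      ∑ h : H, MonoidAlgebra.single ((inr h⁻¹ : P ⋊[φ] H)) ((χ₂ h : k))) :
    ∀ g : P, e * MonoidAlgebra.single ((inl g : P ⋊[φ] H)) 1 * e - e ∈ J := by
  intro g
  set ρ : H →* MonoidAlgebra k (P ⋊[φ] H) := (MonoidAlgebra.of k _).comp inr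
  have he_eq : e = charIdempotent χ₂ ρ := by simp [he, charIdempotent, ρ]
  set a := MonoidAlgebra.single (inl g : P ⋊[φ] H) (1 : k)
  set b := MonoidAlgebra.single (inl g⁻¹ : P ⋊[φ] H) (1 : k)
  have hab : a * b = 1 := by simp [a, b, MonoidAlgebra.one_def]
  let N := J.asIdeal.restrictScalars k
  have key (h : H) : (χ₂ h : k) • (e * b * e - e) + (χ₁ h : k) • (e * a * e - e) ∈ N := by
    have hrel : (b * ρ h) * (b * ρ h) - ((χ₁ h : k) + χ₂ h) • (b * ρ h)
        + ((χ₁ h : k) * χ₂ h) • 1 ∈ J := by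
      rw [hJ]
      refine TwoSidedIdeal.subset_span ⟨inl g⁻¹ * inr h, ?_⟩
      simp [ρ, b, MonoidAlgebra.one_def]
    have hsandwich := J.mul_mem_right _ e (J.mul_mem_left (e * a) _ hrel)
    rw [he_eq, (isIdempotentElem_charIdempotent χ₂ ρ hH).sandwich_quadratic
      (charIdempotent_mul_map χ₂ ρ h) (map_mul_charIdempotent χ₂ ρ h) hab, ← he_eq] at hsandwich
    exact (N.smul_mem_iff (Units.ne_zero _)).mp hsandwich
  obtain ⟨h₀, hh₀⟩ : ∃ h₀, χ₁ h₀ ≠ χ₂ h₀ := DFunLike.ne_iff.mp hχ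
  exact Submodule.mem_of_add_mem_of_smul_add_smul_mem (Units.val_injective.ne hh₀)
    (by simpa using key 1) (key h₀)
end
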